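/- For every unit vector ψ ∈ L²(X) and every ε > 0, there is a unit vector ψ̃ ∈ L²(X) that is nonzero almost everywhere and such that for every measurable set F ⊆ X, |∫_F |ψ|² − ∫_F |ψ̃|²| < ε. That is, one can give any wave function full support while changing all epistemic probabilities by less than ε, uniformly over measurable events. -/

import Mathlib

/-!
Mix the probability density `|ψ|²` with a little of an everywhere positive probability density
`g`, which exists because `μ` is σ-finite: `ψ̃ := √((1 - δ) |ψ|² + δ g)` is a unit vector that
vanishes nowhere, and on every event `F` its probability differs from that of `ψ` by
`δ (P_ψ(F) - P_g(F))`, a difference of two numbers in `[0, 1]` scaled by `δ`.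
-/

open MeasureTheory

section MixWaveFunction

variable {X : Type*}

noncomputable def mixWaveFunction (ψ : X → ℂ) (g : X → ℝ) (δ : ℝ) : X → ℂ :=
  fun x => (√((1 - δ) * ‖ψ x‖ ^ 2 + δ * g x) : ℝ)

theorem norm_mixWaveFunction_sq {ψ : X → ℂ} {g : X → ℝ} {δ : ℝ} (hg : 0 ≤ g) (hδ₀ : 0 ≤ δ)
    (hδ₁ : δ ≤ 1) (x : X) :
    ‖mixWaveFunction ψ g δ x‖ ^ 2 = (1 - δ) * ‖ψ x‖ ^ 2 + δ * g x := by
  have : 0 ≤ (1 - δ) * ‖ψ x‖ ^ 2 + δ * g x :=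
    add_nonneg (mul_nonneg (sub_nonneg.mpr hδ₁) (sq_nonneg _)) (mul_nonneg hδ₀ (hg x))
  rw [mixWaveFunction, Complex.norm_real, Real.norm_of_nonneg (Real.sqrt_nonneg _),
    Real.sq_sqrt this]

theorem mixWaveFunction_ne_zero {ψ : X → ℂ} {g : X → ℝ} {δ : ℝ} (hg : ∀ x, 0 < g x)
    (hδ₀ : 0 < δ) (hδ₁ : δ ≤ 1) (x : X) : mixWaveFunction ψ g δ x ≠ 0 := by
  have : 0 < (1 - δ) * ‖ψ x‖ ^ 2 + δ * g x :=
    add_pos_of_nonneg_of_pos (mul_nonneg (sub_nonneg.mpr hδ₁) (sq_nonneg _)) (mul_pos hδ₀ (hg x))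
  simpa [mixWaveFunction] using (Real.sqrt_pos.mpr this).ne'

variable [MeasurableSpace X] {μ : Measure X}

theorem memLp_mixWaveFunction {ψ : X → ℂ} {g : X → ℝ} {δ : ℝ} (hψ : MemLp ψ 2 μ)
    (hg : 0 ≤ g) (hg_int : Integrable g μ) (hδ₀ : 0 ≤ δ) (hδ₁ : δ ≤ 1) :
    MemLp (mixWaveFunction ψ g δ) 2 μ := by
  have hψ_sq := (memLp_two_iff_integrable_sq_norm hψ.1).mp hψ
  have h_meas : AEStronglyMeasurable (mixWaveFunction ψ g δ) μ :=
    Complex.continuous_ofReal.comp_aestronglyMeasurable <| Real.continuous_sqrt.comp_aestronglyMeasurable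
      ((hψ_sq.const_mul _).add (hg_int.const_mul _)).1
  refine (memLp_two_iff_integrable_sq_norm h_meas).mpr ?_
  simp_rw [norm_mixWaveFunction_sq hg hδ₀ hδ₁]
  exact (hψ_sq.const_mul _).add (hg_int.const_mul _)

end MixWaveFunction

section ProbabilityDensity

variable {X : Type*} [MeasurableSpace X]

theorem exists_pos_integrable_integral_eq_one (μ : Measure X) [SigmaFinite μ] (hμ : μ ≠ 0) :
    ∃ g : X → ℝ, (∀ x, 0 < g x) ∧ Integrable g μ ∧ ∫ x, g x ∂μ = 1 := by
  obtain ⟨g, g_pos, g_meas, g_lt⟩ := exists_pos_lintegral_lt_of_sigmaFinite μ one_ne_zero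
  have g_int : Integrable (fun x => (g x : ℝ)) μ :=
    ⟨g_meas.coe_nnreal_real.aestronglyMeasurable, by
      simpa [HasFiniteIntegral, NNReal.nnnorm_eq] using g_lt.trans ENNReal.one_lt_top⟩
  have support_eq : Function.support (fun x => (g x : ℝ)) = Set.univ :=
    Set.eq_univ_of_forall fun x => NNReal.coe_ne_zero.mpr (g_pos x).ne'
  have integral_pos : 0 < ∫ x, (g x : ℝ) ∂μ := by
    rw [integral_pos_iff_support_of_nonneg (fun x => (g x).coe_nonneg) g_int, support_eq]
    exact Measure.measure_univ_pos.mpr hμ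
  refine ⟨fun x => g x / ∫ x, (g x : ℝ) ∂μ, fun x => div_pos (g_pos x) integral_pos,
    g_int.div_const _, ?_⟩
  rw [integral_div, div_self integral_pos.ne']

variable {μ : Measure X}

theorem setIntegral_mem_Icc_of_integral_eq_one {p : X → ℝ} (hp : 0 ≤ p) (hp_int : Integrable p μ)
    (hp_one : ∫ x, p x ∂μ = 1) (F : Set X) : ∫ x in F, p x ∂μ ∈ Set.Icc 0 1 :=
  ⟨integral_nonneg hp, hp_one ▸ setIntegral_le_integral hp_int (.of_forall hp)⟩

theorem abs_setIntegral_sub_setIntegral_mix_le {p q : X → ℝ} (hp : 0 ≤ p) (hq : 0 ≤ q)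
    (hp_int : Integrable p μ) (hq_int : Integrable q μ)
    (hp_one : ∫ x, p x ∂μ = 1) (hq_one : ∫ x, q x ∂μ = 1) (δ : ℝ) (F : Set X) :
    |(∫ x in F, p x ∂μ) - ∫ x in F, ((1 - δ) * p x + δ * q x) ∂μ| ≤ |δ| := by
  obtain ⟨hP₀, hP₁⟩ := setIntegral_mem_Icc_of_integral_eq_one hp hp_int hp_one F
  obtain ⟨hQ₀, hQ₁⟩ := setIntegral_mem_Icc_of_integral_eq_one hq hq_int hq_one F
  rw [integral_add (hp_int.integrableOn.const_mul _) (hq_int.integrableOn.const_mul _),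
    integral_const_mul, integral_const_mul]
  calc |(∫ x in F, p x ∂μ) - ((1 - δ) * ∫ x in F, p x ∂μ + δ * ∫ x in F, q x ∂μ)|
      = |δ| * |(∫ x in F, p x ∂μ) - ∫ x in F, q x ∂μ| := by rw [← abs_mul]; ring_nf
    _ ≤ |δ| * 1 := by gcongr; rw [abs_le]; constructor <;> linarith
    _ = |δ| := mul_one _

end ProbabilityDensity

/-- Any unit wave function can be given full support while changing all epistemic
probabilities by less than ε, uniformly over measurable events. -/
theorem stmt_6 {X : Type*} [MeasurableSpace X] (μ : Measure X) [SigmaFinite μ]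
    (ψ : X → ℂ) (hψ : MemLp ψ 2 μ) (hψ1 : ∫ x, ‖ψ x‖ ^ 2 ∂μ = 1)
    (ε : ℝ) (hε : 0 < ε) :
    ∃ ψt : X → ℂ, MemLp ψt 2 μ ∧ (∫ x, ‖ψt x‖ ^ 2 ∂μ = 1) ∧
      (∀ᵐ x ∂μ, ψt x ≠ 0) ∧
      ∀ F : Set X, MeasurableSet F →
        |(∫ x in F, ‖ψ x‖ ^ 2 ∂μ) - ∫ x in F, ‖ψt x‖ ^ 2 ∂μ| < ε := by
  have hμ : μ ≠ 0 := by rintro rfl; simp at hψ1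
  obtain ⟨g, hg_pos, hg_int, hg_one⟩ := exists_pos_integrable_integral_eq_one μ hμ
  have hg : 0 ≤ g := fun x => (hg_pos x).le
  have hψ_sq := (memLp_two_iff_integrable_sq_norm hψ.1).mp hψ
  set δ := min (ε / 2) 1
  have hδ₀ : 0 < δ := lt_min (half_pos hε) one_pos
  have hδ₁ : δ ≤ 1 := min_le_right _ _
  have hδε : δ < ε := (min_le_left _ _).trans_lt (half_lt_self hε)
  have norm_sq := norm_mixWaveFunction_sq (ψ := ψ) hg hδ₀.le hδ₁
  refine ⟨mixWaveFunction ψ g δ, memLp_mixWaveFunction hψ hg hg_int hδ₀.le hδ₁, ?_,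
    .of_forall (mixWaveFunction_ne_zero hg_pos hδ₀ hδ₁), fun F _ => ?_⟩
  · simp_rw [norm_sq]
    rw [integral_add (hψ_sq.const_mul _) (hg_int.const_mul _), integral_const_mul,
      integral_const_mul, hψ1, hg_one]
    ring
  · simp_rw [norm_sq]
    refine (abs_setIntegral_sub_setIntegral_mix_le (fun x => sq_nonneg _) hg hψ_sq hg_int hψ1
      hg_one δ F).trans_lt ?_
    rwa [abs_of_pos hδ₀]
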